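/- arXiv:2501.17850 — 2 statements merged into one kernel-verified Lean document; each statement's English description precedes it below -/
import Mathlib

section
/- Let m and n be positive integers, let H be the (m,n)-Horadam sequence, and for k ≥ 1 set s_k = H_k^2 + H_k·H_{k-1} - H_{k-1}^2. Then for all integers k ≥ 2 and l ≥ 1 with l ≠ k, one has s_l ≠ s_k, and in fact |s_l - s_k| > 1. -/
/-- The `(m,n)`-Horadam sequence: `H 0 = m`, `H 1 = n`, `H k = H (k-1) + H (k-2)`. -/
def horadam (m n : ℤ) : ℕ → ℤ
  | 0 => m
  | 1 => n
  | k + 2 => horadam m n (k + 1) + horadam m n k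

/-- `s k = H k ^ 2 + H k * H (k-1) - H (k-1) ^ 2`. -/
def sSeq (m n : ℤ) (k : ℕ) : ℤ :=
  (horadam m n k) ^ 2 + horadam m n k * horadam m n (k - 1) - (horadam m n (k - 1)) ^ 2

lemma horadam_pos (m n : ℤ) (hm : 0 < m) (hn : 0 < n) : ∀ k, 0 < horadam m n k := by
  intro k
  induction k using Nat.twoStepInduction with
  | zero => exact hm
  | one => exact hn
  | more k ih1 ih2 => simpa [horadam] using add_pos ih2 ih1

lemma sSeq_step (m n : ℤ) (hm : 0 < m) (hn : 0 < n) (j : ℕ) :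
    sSeq m n (j + 1) + 2 ≤ sSeq m n (j + 2) := by
  have h1 := horadam_pos m n hm hn j
  have h2 := horadam_pos m n hm hn (j + 1)
  have key : sSeq m n (j + 2) - sSeq m n (j + 1)
      = 2 * horadam m n j * (horadam m n (j + 1) + horadam m n j) := by
    simp only [sSeq]
    rw [show j + 2 - 1 = j + 1 from rfl, show j + 1 - 1 = j from rfl,
      show horadam m n (j + 2) = horadam m n (j + 1) + horadam m n j from rfl]
    ring
  nlinarith

lemma sSeq_mono (m n : ℤ) (hm : 0 < m) (hn : 0 < n) :
    ∀ a b : ℕ, 1 ≤ a → a < b → sSeq m n a + 2 ≤ sSeq m n b := by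
  intro a b ha hab
  induction b with
  | zero => omega
  | succ b ih =>
    rcases Nat.lt_or_ge a b with h | h
    · have hb : 1 ≤ b := by omega
      obtain ⟨j, rfl⟩ : ∃ j, b = j + 1 := ⟨b - 1, by omega⟩
      have := sSeq_step m n hm hn j
      linarith [ih h]
    · have : a = b := by omega
      subst this
      obtain ⟨j, rfl⟩ : ∃ j, a = j + 1 := ⟨a - 1, by omega⟩
      exact sSeq_step m n hm hn j

theorem sSeq_injective (m n : ℤ) (hm : 0 < m) (hn : 0 < n) :
    ∀ k : ℕ, 2 ≤ k → ∀ l : ℕ, 1 ≤ l → l ≠ k →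
      sSeq m n l ≠ sSeq m n k ∧ 1 < |sSeq m n l - sSeq m n k| := by
  intro k hk l hl hlk
  rcases Nat.lt_or_ge l k with h | h
  · have := sSeq_mono m n hm hn l k hl h
    constructor
    · intro heq; linarith
    · rcases abs_cases (sSeq m n l - sSeq m n k) with ⟨h1, _⟩ | ⟨h1, _⟩ <;> linarith
  · have hkl : k < l := by omega
    have := sSeq_mono m n hm hn k l (by omega) hkl
    constructor
    · intro heq; linarith
    · rcases abs_cases (sSeq m n l - sSeq m n k) with ⟨h1, _⟩ | ⟨h1, _⟩ <;> linarith
end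

section
/- Let m and n be coprime integers with 1 < m < n, and let H be the (m,n)-Horadam sequence. Then for every integer j ≥ 1, H_j and H_{j+1} are coprime with 1 < H_j < H_{j+1}, and (m, n) is a maximal pair if and only if (H_j, H_{j+1}) is a maximal pair. -/
/-- `(l, q, ρ)` records the Euclidean algorithm for the pair `(m, n)` run down to
remainder `1`: the remainders are `ρ (l+2) = n`, `ρ (l+1) = m`, `ρ l, …, ρ 0 = 1`,
with quotients `q l, …, q 0 ≥ 1` satisfying `ρ (i+2) = q i * ρ (i+1) + ρ i` and
`0 < ρ i < ρ (i+1)` for all `i ≤ l`. -/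
def IsQuotSeq (m n : ℤ) (l : ℕ) (q ρ : ℕ → ℤ) : Prop :=
  ρ (l + 2) = n ∧ ρ (l + 1) = m ∧ ρ 0 = 1 ∧
    ∀ i ≤ l, 1 ≤ q i ∧ ρ (i + 2) = q i * ρ (i + 1) + ρ i ∧ 0 < ρ i ∧ ρ i < ρ (i + 1)

/-- `(m, n)` is a maximal pair if in its quotient sequence `q i = 1` for all
`1 ≤ i ≤ l` and `q 0 ∈ {1, 2}`. -/
def MaximalPair (m n : ℤ) : Prop :=
  ∃ l : ℕ, ∃ q ρ : ℕ → ℤ, IsQuotSeq m n l q ρ ∧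
    (∀ i : ℕ, 1 ≤ i → i ≤ l → q i = 1) ∧ (q 0 = 1 ∨ q 0 = 2)

lemma maximalPair_step (a b : ℤ) (ha : 1 < a) (hab : a < b) :
    MaximalPair a b ↔ MaximalPair b (a + b) := by
  constructor
  · rintro ⟨l, q, ρ, ⟨h2, h1, h0, hrec⟩, hq1, hq0⟩
    set q' : ℕ → ℤ := fun i => if i = l + 1 then 1 else q i with hq'
    set ρ' : ℕ → ℤ := fun i => if i = l + 3 then a + b else ρ i with hρ'
    have hq'of : ∀ i, i ≠ l + 1 → q' i = q i := by
      intro i hi; simp only [hq', if_neg hi]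
    have hρ'of : ∀ i, i ≠ l + 3 → ρ' i = ρ i := by
      intro i hi; simp only [hρ', if_neg hi]
    have hq'at : q' (l + 1) = 1 := by simp [hq']
    have hρ'at : ρ' (l + 3) = a + b := by simp [hρ']
    refine ⟨l + 1, q', ρ', ⟨?_, ?_, ?_, ?_⟩, ?_, ?_⟩
    · exact hρ'at
    · rw [hρ'of _ (by omega)]; exact h2
    · rw [hρ'of _ (by omega)]; exact h0
    · intro i hi
      rcases Nat.lt_or_ge i (l + 1) with hlt | hge
      · have hi' : i ≤ l := by omega
        obtain ⟨hq, hr, hp, hlt'⟩ := hrec i hi'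
        rw [hq'of _ (by omega), hρ'of _ (by omega), hρ'of _ (by omega), hρ'of _ (by omega)]
        exact ⟨hq, hr, hp, hlt'⟩
      · have : i = l + 1 := by omega
        subst this
        rw [hq'at, show l + 1 + 2 = l + 3 from rfl, hρ'at,
          hρ'of _ (by omega), hρ'of _ (by omega)]
        refine ⟨le_refl 1, ?_, by rw [h1]; omega, by rw [h1, h2]; omega⟩
        rw [h1, h2]; ring
    · intro i hi1 hil
      rcases Nat.lt_or_ge i (l + 1) with hlt | hge
      · rw [hq'of _ (by omega)]; exact hq1 i hi1 (by omega)
      · have : i = l + 1 := by omega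
        subst this; exact hq'at
    · rw [hq'of _ (by omega)]; exact hq0
  · rintro ⟨l, q, ρ, ⟨h2, h1, h0, hrec⟩, hq1, hq0⟩
    obtain ⟨hqT, hrT, hpT, hltT⟩ := hrec l le_rfl
    rw [h2] at hrT
    rw [h1] at hrT hltT
    have hql : q l = 1 := by
      by_contra hne
      have hq2 : 2 ≤ q l := by omega
      nlinarith
    have hrl : ρ l = a := by rw [hql] at hrT; linarith
    have hl0 : l ≠ 0 := by
      intro h
      rw [h, h0] at hrl
      omega
    obtain ⟨k, rfl⟩ := Nat.exists_eq_succ_of_ne_zero hl0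
    refine ⟨k, q, ρ, ⟨h1, hrl, h0, ?_⟩, ?_, hq0⟩
    · intro i hi
      exact hrec i (by omega)
    · intro i hi1 hik
      exact hq1 i hi1 (by omega)

lemma horadam_succ_succ (m n : ℤ) (k : ℕ) :
    horadam m n (k + 2) = horadam m n (k + 1) + horadam m n k := rfl

theorem maximal_pair_iff_horadam_maximal_pair (m n : ℤ) (hm : 1 < m) (hmn : m < n)
    (hcop : IsCoprime m n) (j : ℕ) (hj : 1 ≤ j) :
    IsCoprime (horadam m n j) (horadam m n (j + 1)) ∧
      1 < horadam m n j ∧ horadam m n j < horadam m n (j + 1) ∧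
      (MaximalPair m n ↔ MaximalPair (horadam m n j) (horadam m n (j + 1))) := by
  induction j, hj using Nat.le_induction with
  | base =>
    have h1 : horadam m n 1 = n := rfl
    have h2 : horadam m n 2 = n + m := rfl
    rw [h1, h2]
    have hcop' : IsCoprime n (n + m) := by
      have := (hcop.symm.add_mul_left_right 1)
      simpa [add_comm] using this
    refine ⟨hcop', by omega, by omega, ?_⟩
    have := maximalPair_step m n hm hmn
    rwa [show m + n = n + m by ring] at this
  | succ k hk ih =>
    obtain ⟨ihcop, ih1, ihlt, ihiff⟩ := ih
    have hrec : horadam m n (k + 2) = horadam m n (k + 1) + horadam m n k :=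
      horadam_succ_succ m n k
    have hcop' : IsCoprime (horadam m n (k + 1)) (horadam m n (k + 2)) := by
      rw [hrec]
      have := (ihcop.symm.add_mul_left_right 1)
      simpa [add_comm] using this
    refine ⟨hcop', by omega, by rw [hrec]; omega, ?_⟩
    rw [ihiff]
    have := maximalPair_step (horadam m n k) (horadam m n (k + 1)) ih1 ihlt
    rwa [show horadam m n k + horadam m n (k + 1) = horadam m n (k + 2) by
      rw [hrec]; ring] at this
end
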